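/- arXiv:1310.4772 — 3 statements merged into one kernel-verified Lean document; each statement's English description precedes it below -/
import Mathlib

section
/- Let G be a Lie group acting smoothly on a manifold Q with infinitesimal generator ξ_Q for ξ ∈ 𝔤. Suppose L_d : Q × Q → ℝ is invariant under the diagonal action: L_d(g·q⁰, g·q¹) = L_d(q⁰,q¹) for all g ∈ G. Then the two discrete momentum maps J⁺, J⁻ : Q × Q → 𝔤* defined by ⟨J⁺(q⁰,q¹), ξ⟩ := ⟨D₂L_d(q⁰,q¹), ξ_Q(q¹)⟩ and ⟨J⁻(q⁰,q¹), ξ⟩ := ⟨-D₁L_d(q⁰,q¹), ξ_Q(q⁰)⟩ coincide: J⁺ = J⁻. -/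
noncomputable section

variable {Q : Type*} [NormedAddCommGroup Q] [NormedSpace ℝ Q] {𝔤 : Type*}

/-- Partial differential in the first slot. -/
def D1 (L : Q × Q → ℝ) (q q' : Q) : Q →L[ℝ] ℝ :=
  fderiv ℝ (fun x => L (x, q')) q

/-- Partial differential in the second slot. -/
def D2 (L : Q × Q → ℝ) (q q' : Q) : Q →L[ℝ] ℝ :=
  fderiv ℝ (fun x => L (q, x)) q'

/-- If the smooth discrete Lagrangian `L_d` is invariant under the (diagonal)
action of a Lie group `G` — encoded by the flows `Φ t ξ = exp(tξ)·(-)` of the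
infinitesimal generators `ξ_Q` — then the two discrete momentum maps coincide:
`⟨J⁺(q⁰,q¹),ξ⟩ = ⟨D₂L_d, ξ_Q(q¹)⟩` equals `⟨J⁻(q⁰,q¹),ξ⟩ = ⟨-D₁L_d, ξ_Q(q⁰)⟩`. -/
theorem discrete_momentum_maps_coincide
    (L : Q × Q → ℝ) (hL : ContDiff ℝ (⊤ : ℕ∞) L)
    (Φ : ℝ → 𝔤 → Q → Q) (ξQ : 𝔤 → Q → Q)
    (hΦ0 : ∀ (ξ : 𝔤) (q : Q), Φ 0 ξ q = q)
    (hgen : ∀ (ξ : 𝔤) (q : Q), HasDerivAt (fun t => Φ t ξ q) (ξQ ξ q) 0)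
    (hinv : ∀ (t : ℝ) (ξ : 𝔤) (q0 q1 : Q), L (Φ t ξ q0, Φ t ξ q1) = L (q0, q1)) :
    ∀ (ξ : 𝔤) (q0 q1 : Q),
      (D2 L q0 q1) (ξQ ξ q1) = (-(D1 L q0 q1)) (ξQ ξ q0) := by

  intro ξ q0 q1
  have hdL : HasFDerivAt L (fderiv ℝ L (q0, q1)) (q0, q1) :=
    (hL.differentiable (by simp) (q0, q1)).hasFDerivAt
  set f' := fderiv ℝ L (q0, q1) with hf'
  -- partial derivatives
  have h1 : HasFDerivAt (fun x => L (x, q1))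
      (f'.comp (ContinuousLinearMap.inl ℝ Q Q)) q0 :=
    hdL.comp q0 (hasFDerivAt_prodMk_left q0 q1)
  have h2 : HasFDerivAt (fun x => L (q0, x))
      (f'.comp (ContinuousLinearMap.inr ℝ Q Q)) q1 :=
    hdL.comp q1 (hasFDerivAt_prodMk_right q0 q1)
  have hD1 : D1 L q0 q1 = f'.comp (ContinuousLinearMap.inl ℝ Q Q) := h1.fderiv
  have hD2 : D2 L q0 q1 = f'.comp (ContinuousLinearMap.inr ℝ Q Q) := h2.fderiv
  -- curve
  have hc : HasDerivAt (fun t => (Φ t ξ q0, Φ t ξ q1)) (ξQ ξ q0, ξQ ξ q1) 0 :=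
    (hgen ξ q0).prodMk (hgen ξ q1)
  have hdL' : HasFDerivAt L f' (Φ 0 ξ q0, Φ 0 ξ q1) := by
    rw [hΦ0, hΦ0]; exact hdL
  have hcomp : HasDerivAt (fun t => L (Φ t ξ q0, Φ t ξ q1))
      (f' (ξQ ξ q0, ξQ ξ q1)) 0 := hdL'.comp_hasDerivAt 0 hc
  have hconst : (fun t => L (Φ t ξ q0, Φ t ξ q1)) = fun _ => L (q0, q1) := by
    funext t; exact hinv t ξ q0 q1
  have hzero : f' (ξQ ξ q0, ξQ ξ q1) = 0 := by
    have := hcomp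
    rw [hconst] at this
    exact this.unique (hasDerivAt_const 0 _)
  have hsplit : f' (ξQ ξ q0, ξQ ξ q1) = f' (ξQ ξ q0, 0) + f' (0, ξQ ξ q1) := by
    rw [← map_add]
    congr 1
    simp
  rw [hD1, hD2]
  simp only [ContinuousLinearMap.comp_apply, ContinuousLinearMap.inl_apply,
    ContinuousLinearMap.inr_apply, ContinuousLinearMap.neg_apply]
  have : f' (ξQ ξ q0, 0) + f' (0, ξQ ξ q1) = 0 := by rw [← hsplit, hzero]
  linarith


end
end

section
/- Under the assumptions of the discrete Noether theorem (L_d : Q × Q → ℝ invariant under the diagonal action of a Lie group G on Q), if a discrete trajectory (q^0,...,q^N) satisfies the discrete Euler-Lagrange equations D₁L_d(q^j,q^{j+1}) + D₂L_d(q^{j-1},q^j) = 0 for j = 1,...,N-1, then the discrete momentum map is conserved along the trajectory: J(q^j, q^{j+1}) = J(q^{j-1}, q^j) for all j = 1,...,N-1, where ⟨J(q,q'), ξ⟩ = ⟨D₂L_d(q,q'), ξ_Q(q')⟩. -/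
noncomputable section

variable {Q : Type*} [NormedAddCommGroup Q] [NormedSpace ℝ Q] {𝔤 : Type*}

/-- Infinitesimal invariance: differentiating the invariance of `L` along the
flow at `t = 0` yields `D₁L(q₀,q₁)(ξ_Q q₀) + D₂L(q₀,q₁)(ξ_Q q₁) = 0`. -/
theorem infinitesimal_invariance
    (L : Q × Q → ℝ) (hL : ContDiff ℝ (⊤ : ℕ∞) L)
    (Φ : ℝ → 𝔤 → Q → Q) (ξQ : 𝔤 → Q → Q)
    (hΦ0 : ∀ (ξ : 𝔤) (q : Q), Φ 0 ξ q = q)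
    (hgen : ∀ (ξ : 𝔤) (q : Q), HasDerivAt (fun t => Φ t ξ q) (ξQ ξ q) 0)
    (hinv : ∀ (t : ℝ) (ξ : 𝔤) (q0 q1 : Q), L (Φ t ξ q0, Φ t ξ q1) = L (q0, q1))
    (q0 q1 : Q) (ξ : 𝔤) :
    (D1 L q0 q1) (ξQ ξ q0) + (D2 L q0 q1) (ξQ ξ q1) = 0 := by
  have hLd : Differentiable ℝ L := hL.differentiable (by simp)
  have hF : HasFDerivAt L (fderiv ℝ L (q0, q1)) (q0, q1) := (hLd _).hasFDerivAt
  -- derivative of the curve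
  have hcurve : HasDerivAt (fun t => (Φ t ξ q0, Φ t ξ q1)) (ξQ ξ q0, ξQ ξ q1) 0 :=
    (hgen ξ q0).prodMk (hgen ξ q1)
  have hpt : ((fun t => (Φ t ξ q0, Φ t ξ q1)) 0) = (q0, q1) := by
    simp [hΦ0]
  have hcomp : HasDerivAt (fun t => L (Φ t ξ q0, Φ t ξ q1))
      (fderiv ℝ L (q0, q1) (ξQ ξ q0, ξQ ξ q1)) 0 := by
    have := (hpt ▸ hF : HasFDerivAt L (fderiv ℝ L (q0, q1))
      ((fun t => (Φ t ξ q0, Φ t ξ q1)) 0)).comp_hasDerivAt 0 hcurve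
    exact this
  have hconst : (fun t : ℝ => L (Φ t ξ q0, Φ t ξ q1)) = fun _ => L (q0, q1) :=
    funext fun t => hinv t ξ q0 q1
  rw [hconst] at hcomp
  have hzero : fderiv ℝ L (q0, q1) (ξQ ξ q0, ξQ ξ q1) = 0 :=
    hcomp.unique (hasDerivAt_const 0 _)
  -- partial derivatives
  have h1 : D1 L q0 q1 = (fderiv ℝ L (q0, q1)).comp (ContinuousLinearMap.inl ℝ Q Q) :=
    (hF.comp q0 (hasFDerivAt_prodMk_left q0 q1)).fderiv
  have h2 : D2 L q0 q1 = (fderiv ℝ L (q0, q1)).comp (ContinuousLinearMap.inr ℝ Q Q) :=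
    (hF.comp q1 (hasFDerivAt_prodMk_right q0 q1)).fderiv
  rw [h1, h2]
  have : ((ξQ ξ q0, 0) : Q × Q) + (0, ξQ ξ q1) = (ξQ ξ q0, ξQ ξ q1) := by
    simp
  calc fderiv ℝ L (q0, q1) ((ξQ ξ q0, 0) : Q × Q)
        + fderiv ℝ L (q0, q1) ((0, ξQ ξ q1) : Q × Q)
      = fderiv ℝ L (q0, q1) (ξQ ξ q0, ξQ ξ q1) := by
        rw [← ContinuousLinearMap.map_add, this]
    _ = 0 := hzero

/-- Discrete Noether theorem: if `L_d` is invariant under the diagonal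
`G`-action (encoded via the flows of the infinitesimal generators), then along
any solution of the discrete Euler-Lagrange equations the discrete momentum map
`⟨J(q,q'),ξ⟩ = ⟨D₂L_d(q,q'), ξ_Q(q')⟩` is conserved. -/
theorem discrete_Noether_conservation
    (L : Q × Q → ℝ) (hL : ContDiff ℝ (⊤ : ℕ∞) L)
    (Φ : ℝ → 𝔤 → Q → Q) (ξQ : 𝔤 → Q → Q)
    (hΦ0 : ∀ (ξ : 𝔤) (q : Q), Φ 0 ξ q = q)
    (hgen : ∀ (ξ : 𝔤) (q : Q), HasDerivAt (fun t => Φ t ξ q) (ξQ ξ q) 0)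
    (hinv : ∀ (t : ℝ) (ξ : 𝔤) (q0 q1 : Q), L (Φ t ξ q0, Φ t ξ q1) = L (q0, q1))
    (N : ℕ) (q : ℕ → Q)
    (hDEL : ∀ j, 1 ≤ j → j ≤ N - 1 →
      D1 L (q j) (q (j + 1)) + D2 L (q (j - 1)) (q j) = 0) :
    ∀ j, 1 ≤ j → j ≤ N - 1 → ∀ ξ : 𝔤,
      (D2 L (q j) (q (j + 1))) (ξQ ξ (q (j + 1))) =
      (D2 L (q (j - 1)) (q j)) (ξQ ξ (q j)) := by
  intro j hj1 hjN ξ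
  have hdel := hDEL j hj1 hjN
  have hdel' : (D1 L (q j) (q (j + 1))) (ξQ ξ (q j))
      + (D2 L (q (j - 1)) (q j)) (ξQ ξ (q j)) = 0 := by
    have := congrArg (fun f : Q →L[ℝ] ℝ => f (ξQ ξ (q j))) hdel
    simpa using this
  have hkey := infinitesimal_invariance L hL Φ ξQ hΦ0 hgen hinv (q j) (q (j + 1)) ξ
  linarith

end
end

section
/- Let G be a Lie group acting diagonally on M and suppose the discrete Lagrangian density 𝓛_d(Δ, φ₁, φ₂, φ₃) is G-invariant: 𝓛_d(Δ, g·φ₁, g·φ₂, g·φ₃) = 𝓛_d(Δ, φ₁, φ₂, φ₃). Then for each Δ and each ξ ∈ 𝔤 the three discrete covariant momentum maps sum to zero: ⟨J¹(Δ, φ₁, φ₂, φ₃), ξ⟩ + ⟨J²(Δ, φ₁, φ₂, φ₃), ξ⟩ + ⟨J³(Δ, φ₁, φ₂, φ₃), ξ⟩ = 0, where ⟨J¹, ξ⟩ := D₁𝓛_d · ξ_M(φ₁), ⟨J², ξ⟩ := D₂𝓛_d · ξ_M(φ₂), ⟨J³, ξ⟩ := D₃𝓛_d · ξ_M(φ₃)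 (local discrete covariant Noether theorem). -/
noncomputable section

variable {M : Type*} [NormedAddCommGroup M] [NormedSpace ℝ M] {𝔤 : Type*}

/-- Partial differential of `𝓛 : M³ → ℝ` in its first slot. -/
def T1 (L : M × M × M → ℝ) (p : M × M × M) : M →L[ℝ] ℝ :=
  fderiv ℝ (fun x => L (x, p.2.1, p.2.2)) p.1

/-- Partial differential of `𝓛 : M³ → ℝ` in its second slot. -/
def T2 (L : M × M × M → ℝ) (p : M × M × M) : M →L[ℝ] ℝ :=
  fderiv ℝ (fun x => L (p.1, x, p.2.2)) p.2.1

/-- Partial differential of `𝓛 : M³ → ℝ` in its third slot. -/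
def T3 (L : M × M × M → ℝ) (p : M × M × M) : M →L[ℝ] ℝ :=
  fderiv ℝ (fun x => L (p.1, p.2.1, x)) p.2.2

/-- Local discrete covariant Noether theorem: if the discrete Lagrangian
density `𝓛_d(Δ,·,·,·)` is invariant under the diagonal `G`-action (encoded via
the flows `Φ t ξ = exp(tξ)·(-)` of the infinitesimal generators `ξ_M`), then
the three discrete covariant momentum maps sum to zero:
`⟨J¹,ξ⟩ + ⟨J²,ξ⟩ + ⟨J³,ξ⟩ = 0`. -/
theorem local_discrete_covariant_Noether
    {Δty : Type*} (Lag : Δty → M × M × M → ℝ)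
    (hLag : ∀ d, ContDiff ℝ (⊤ : ℕ∞) (Lag d))
    (Φ : ℝ → 𝔤 → M → M) (ξM : 𝔤 → M → M)
    (hΦ0 : ∀ (ξ : 𝔤) (q : M), Φ 0 ξ q = q)
    (hgen : ∀ (ξ : 𝔤) (q : M), HasDerivAt (fun t => Φ t ξ q) (ξM ξ q) 0)
    (hinv : ∀ (d : Δty) (t : ℝ) (ξ : 𝔤) (p1 p2 p3 : M),
      Lag d (Φ t ξ p1, Φ t ξ p2, Φ t ξ p3) = Lag d (p1, p2, p3)) :
    ∀ (d : Δty) (ξ : 𝔤) (p : M × M × M),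
      (T1 (Lag d) p) (ξM ξ p.1) + (T2 (Lag d) p) (ξM ξ p.2.1) +
        (T3 (Lag d) p) (ξM ξ p.2.2) = 0 := by
  intro d ξ ⟨p1, p2, p3⟩
  set D := fderiv ℝ (Lag d) (p1, p2, p3) with hD
  have hL : HasFDerivAt (Lag d) D (p1, p2, p3) :=
    (((hLag d).differentiable (by simp)) (p1, p2, p3)).hasFDerivAt
  -- the total derivative along the generator vanishes
  have hc : HasDerivAt (fun t => (Φ t ξ p1, Φ t ξ p2, Φ t ξ p3))
      (ξM ξ p1, ξM ξ p2, ξM ξ p3) 0 :=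
    (hgen ξ p1).prodMk ((hgen ξ p2).prodMk (hgen ξ p3))
  have hL' : HasFDerivAt (Lag d) D (Φ 0 ξ p1, Φ 0 ξ p2, Φ 0 ξ p3) := by
    rw [hΦ0, hΦ0, hΦ0]; exact hL
  have hcomp : HasDerivAt (fun t => Lag d (Φ t ξ p1, Φ t ξ p2, Φ t ξ p3))
      (D (ξM ξ p1, ξM ξ p2, ξM ξ p3)) 0 := hL'.comp_hasDerivAt 0 hc
  have hconst : (fun t => Lag d (Φ t ξ p1, Φ t ξ p2, Φ t ξ p3))
      = fun _ => Lag d (p1, p2, p3) := funext fun t => hinv d t ξ p1 p2 p3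
  have hzero : D (ξM ξ p1, ξM ξ p2, ξM ξ p3) = 0 :=
    hcomp.unique (hconst ▸ hasDerivAt_const 0 _)
  -- partial derivatives as slices of the total derivative
  have h1 : ∀ v : M, T1 (Lag d) (p1, p2, p3) v = D (v, 0, 0) := by
    intro v
    have : HasFDerivAt (fun x : M => Lag d (x, p2, p3))
        (D.comp (ContinuousLinearMap.inl ℝ M (M × M))) p1 :=
      hL.comp p1 (hasFDerivAt_prodMk_left p1 (p2, p3))
    simp [T1, this.fderiv, Prod.mk_zero_zero]
  have h2 : ∀ v : M, T2 (Lag d) (p1, p2, p3) v = D (0, v, 0) := by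
    intro v
    have hin : HasFDerivAt (fun x : M => ((p1 : M), (x, p3)))
        ((ContinuousLinearMap.inr ℝ M (M × M)).comp
          (ContinuousLinearMap.inl ℝ M M)) p2 :=
      (hasFDerivAt_prodMk_right p1 (p2, p3)).comp p2
        (hasFDerivAt_prodMk_left p2 p3)
    have : HasFDerivAt (fun x : M => Lag d (p1, x, p3))
        (D.comp ((ContinuousLinearMap.inr ℝ M (M × M)).comp
          (ContinuousLinearMap.inl ℝ M M))) p2 := hL.comp p2 hin
    simp [T2, this.fderiv]
  have h3 : ∀ v : M, T3 (Lag d) (p1, p2, p3) v = D (0, 0, v) := by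
    intro v
    have hin : HasFDerivAt (fun x : M => ((p1 : M), (p2, x)))
        ((ContinuousLinearMap.inr ℝ M (M × M)).comp
          (ContinuousLinearMap.inr ℝ M M)) p3 :=
      (hasFDerivAt_prodMk_right p1 (p2, p3)).comp p3
        (hasFDerivAt_prodMk_right p2 p3)
    have : HasFDerivAt (fun x : M => Lag d (p1, p2, x))
        (D.comp ((ContinuousLinearMap.inr ℝ M (M × M)).comp
          (ContinuousLinearMap.inr ℝ M M))) p3 := hL.comp p3 hin
    simp [T3, this.fderiv]
  have : ((ξM ξ p1, ξM ξ p2, ξM ξ p3) : M × M × M)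
      = (ξM ξ p1, 0, 0) + (0, ξM ξ p2, 0) + (0, 0, ξM ξ p3) := by
    simp [Prod.ext_iff]
  calc T1 (Lag d) (p1, p2, p3) (ξM ξ p1) + T2 (Lag d) (p1, p2, p3) (ξM ξ p2)
        + T3 (Lag d) (p1, p2, p3) (ξM ξ p3)
      = D (ξM ξ p1, 0, 0) + D (0, ξM ξ p2, 0) + D (0, 0, ξM ξ p3) := by
        rw [h1, h2, h3]
    _ = D (ξM ξ p1, ξM ξ p2, ξM ξ p3) := by rw [this, map_add, map_add]
    _ = 0 := hzero

end
end
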